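/- If Φ is false, then some state with status UNSAT is reachable from the initial state via the transition rules of basic Incremental Determinization. -/

import Mathlib

/-! Basic framework: variables are `X ⊕ Y` where `X` are the universal and
`Y` the existential variables (this makes `X` and `Y` disjoint by construction). -/

/-- A literal: a variable together with a polarity. -/
abbrev Lit (X Y : Type) := (X ⊕ Y) × Bool

/-- A clause is a finite set of literals. -/
abbrev Clause (X Y : Type) := Finset (Lit X Y)

/-- A (total) assignment to all variables. Assignments "to a set `D` of variables"
are modelled as total assignments; all notions below only inspect the relevant variables. -/
abbrev Assn (X Y : Type) := (X ⊕ Y) → Bool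

/-- An assignment satisfies a literal if it maps its variable to its polarity. -/
def satLit {X Y : Type} (σ : Assn X Y) (l : Lit X Y) : Prop := σ l.1 = l.2

/-- An assignment satisfies a clause if it satisfies at least one of its literals. -/
def satClause {X Y : Type} (σ : Assn X Y) (c : Clause X Y) : Prop := ∃ l ∈ c, satLit σ l

/-- An assignment satisfies a clause set if it satisfies every clause in it. -/
def satCnf {X Y : Type} (σ : Assn X Y) (ψ : Set (Clause X Y)) : Prop := ∀ c ∈ ψ, satClause σ c

/-- The combined assignment `(xa, ya)`. -/
def combine {X Y : Type} (xa : X → Bool) (ya : Y → Bool) : Assn X Y := Sum.elim xa ya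

/-- The restriction of an assignment to the universal variables `X`. -/
def restrX {X Y : Type} (σ : Assn X Y) : X → Bool := fun x => σ (Sum.inl x)

/-- Truth of the 2QBF `∀X.∃Y.φ`: there is a Skolem function `f` such that for every
assignment `xa` to `X` the combined assignment `(xa, f(xa))` satisfies `φ`. -/
def qbfTrue {X Y : Type} (φ : Set (Clause X Y)) : Prop :=
  ∃ f : (X → Bool) → (Y → Bool), ∀ xa : X → Bool, satCnf (combine xa (f xa)) φ

/-- `v` has a unique Skolem function for domain `χ` in `ψ`: for every assignment `xa` to `X`
satisfying `χ` there is exactly one Boolean `b` such that some assignment `ya` to the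
existential variables with `ya v = b` makes `(xa, ya)` satisfy `ψ`. -/
def uniqueSkolem {X Y : Type} (ψ : Set (Clause X Y)) (χ : (X → Bool) → Prop) (v : Y) : Prop :=
  ∀ xa : X → Bool, χ xa →
    ∃! b : Bool, ∃ ya : Y → Bool, ya v = b ∧ satCnf (combine xa ya) ψ

/-- `C|_D`: the clauses of `C` all of whose variables lie in `D`. -/
def restrictC {X Y : Type} (C : Set (Clause X Y)) (D : Set (X ⊕ Y)) : Set (Clause X Y) :=
  {c ∈ C | ∀ l ∈ c, l.1 ∈ D}

/-- Clause `c` has unique consequence `v` relative to `D`: it contains a literal of `v`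
and all its other literals are of variables in `D`. -/
def hasUC {X Y : Type} (c : Clause X Y) (v : Y) (D : Set (X ⊕ Y)) : Prop :=
  (∃ b : Bool, (Sum.inr v, b) ∈ c) ∧ ∀ l ∈ c, l.1 ≠ Sum.inr v → l.1 ∈ D

/-- `U_v`: the clauses of `C` with unique consequence `v` relative to `D`. -/
def UC {X Y : Type} (C : Set (Clause X Y)) (v : Y) (D : Set (X ⊕ Y)) : Set (Clause X Y) :=
  {c ∈ C | hasUC c v D}

/-- `A_(v,b)`: some clause `c` in `U_v` contains the literal `(v, b)` and the assignment
falsifies every literal of `c` other than the literals of `v`. -/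
def Ant {X Y : Type} (C : Set (Clause X Y)) (v : Y) (D : Set (X ⊕ Y)) (b : Bool)
    (σ : Assn X Y) : Prop :=
  ∃ c ∈ UC C v D, (Sum.inr v, b) ∈ c ∧ ∀ l ∈ c, l.1 ≠ Sum.inr v → ¬ satLit σ l

/-- `deterministic(v, C, χ, D)`. -/
def deterministic {X Y : Type} (v : Y) (C : Set (Clause X Y)) (χ : (X → Bool) → Prop)
    (D : Set (X ⊕ Y)) : Prop :=
  ∀ σ : Assn X Y, satCnf σ (restrictC C D) → χ (restrX σ) →
    Ant C v D true σ ∨ Ant C v D false σ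

/-- `unconflicted(v, C, χ, D)`. -/
def unconflicted {X Y : Type} (v : Y) (C : Set (Clause X Y)) (χ : (X → Bool) → Prop)
    (D : Set (X ⊕ Y)) : Prop :=
  ∀ σ : Assn X Y, satCnf σ (restrictC C D) → χ (restrX σ) →
    ¬ (Ant C v D true σ ∧ Ant C v D false σ)

/-- `v` has a unique Skolem function relative to `D` for domain `χ` in `C`: for every
assignment to `D` satisfying `C|_D` whose restriction to `X` satisfies `χ`, there is exactly
one Boolean `b` such that extending the assignment by `v ↦ b` satisfies every clause of `U_v`. -/
def uniqueSkolemRel {X Y : Type} [DecidableEq X] [DecidableEq Y] (v : Y)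
    (C : Set (Clause X Y)) (χ : (X → Bool) → Prop) (D : Set (X ⊕ Y)) : Prop :=
  ∀ σ : Assn X Y, satCnf σ (restrictC C D) → χ (restrX σ) →
    ∃! b : Bool, satCnf (Function.update σ (Sum.inr v) b) (UC C v D)

/-! The state of the Incremental Determinization solver. -/

/-- The solver status. -/
inductive Status (X Y : Type) where
  | ready : Status X Y
  | conflict (L : Clause X Y) (d : Assn X Y) : Status X Y
  | sat : Status X Y
  | unsat : Status X Y

/-- A solver state `(S, C, D, χ, α)`: a status, a stack of clause sets, a stack of sets of
variables, and two predicates on assignments to `X`. -/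
structure IDState (X Y : Type) where
  status : Status X Y
  C : List (Set (Clause X Y))
  D : List (Set (X ⊕ Y))
  chi : (X → Bool) → Prop
  alpha : (X → Bool) → Prop

/-- The union of the elements of a stack of sets. -/
def stackUnion {β : Type} (S : List (Set β)) : Set β := {x | ∃ s ∈ S, x ∈ s}

/-- The first element (index 0) of a stack of sets. -/
def first {β : Type} (S : List (Set β)) : Set β := S.getD 0 ∅

/-- Add an element to the last set of a stack. -/
def addLast {β : Type} : List (Set β) → β → List (Set β)
  | [], v => [{v}]
  | [s], v => [insert v s]
  | s :: t :: rest, v => s :: addLast (t :: rest) v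

/-- Add an element to the first set of a stack. -/
def addFirst {β : Type} : List (Set β) → β → List (Set β)
  | [], x => [{x}]
  | s :: rest, x => insert x s :: rest

/-- The initial state `(Ready, ⟨φ⟩, ⟨X⟩, ⊤, ⊤)`. -/
def initState {X Y : Type} (φ : Set (Clause X Y)) : IDState X Y :=
  ⟨Status.ready, [φ], [Set.range Sum.inl], fun _ => True, fun _ => True⟩

/-- The transition rules of basic Incremental Determinization. -/
inductive Step {X Y : Type} [DecidableEq X] [DecidableEq Y] :
    IDState X Y → IDState X Y → Prop

  | propagate (C : List (Set (Clause X Y))) (D : List (Set (X ⊕ Y)))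
      (χ α : (X → Bool) → Prop) (v : Y)
      (hv : Sum.inr v ∉ stackUnion D)
      (hdet : deterministic v (stackUnion C) (fun xa => χ xa ∧ α xa) (stackUnion D))
      (hunc : unconflicted v (stackUnion C) (fun xa => χ xa ∧ α xa) (stackUnion D)) :
      Step ⟨Status.ready, C, D, χ, α⟩ ⟨Status.ready, C, addLast D (Sum.inr v), χ, α⟩
  | decide (C : List (Set (Clause X Y))) (D : List (Set (X ⊕ Y)))
      (χ α : (X → Bool) → Prop) (v : Y) (δ : Set (Clause X Y))
      (hv : Sum.inr v ∉ stackUnion D) (hδfin : δ.Finite)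
      (hδ : ∀ c ∈ δ, hasUC c v (stackUnion D)) :
      Step ⟨Status.ready, C, D, χ, α⟩ ⟨Status.ready, C ++ [δ], D ++ [∅], χ, α⟩
  | sat (C : List (Set (Clause X Y))) (D : List (Set (X ⊕ Y)))
      (χ : (X → Bool) → Prop)
      (hD : stackUnion D = Set.univ) :
      Step ⟨Status.ready, C, D, χ, fun _ => True⟩ ⟨Status.sat, C, D, χ, fun _ => True⟩
  | conflict (C : List (Set (Clause X Y))) (D : List (Set (X ⊕ Y)))
      (χ α : (X → Bool) → Prop) (v : Y) (σ : Assn X Y)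
      (hv : Sum.inr v ∉ stackUnion D)
      (hsat : satCnf σ (restrictC (stackUnion C) (stackUnion D)))
      (hχ : χ (restrX σ)) (hα : α (restrX σ))
      (ht : Ant (stackUnion C) v (stackUnion D) true σ)
      (hf : Ant (stackUnion C) v (stackUnion D) false σ) :
      Step ⟨Status.ready, C, D, χ, α⟩
        ⟨Status.conflict {(Sum.inr v, true), (Sum.inr v, false)} σ, C, D, χ, α⟩
  | analyze (C : List (Set (Clause X Y))) (D : List (Set (X ⊕ Y)))
      (χ α : (X → Bool) → Prop) (L : Clause X Y) (σ : Assn X Y)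
      (c : Clause X Y) (l : Lit X Y)
      (hc : c ∈ first C) (hl : l ∈ L) (hlc : (l.1, !l.2) ∈ c) :
      Step ⟨Status.conflict L σ, C, D, χ, α⟩
        ⟨Status.conflict (L.erase l ∪ c.erase (l.1, !l.2)) σ, C, D, χ, α⟩
  | learn (C : List (Set (Clause X Y))) (D : List (Set (X ⊕ Y)))
      (χ α : (X → Bool) → Prop) (L : Clause X Y) (σ : Assn X Y)
      (h : ∃ l ∈ L, l.1 ∉ stackUnion D) :
      Step ⟨Status.conflict L σ, C, D, χ, α⟩ ⟨Status.ready, addFirst C L, D, χ, α⟩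
  | unsat (C : List (Set (Clause X Y))) (D : List (Set (X ⊕ Y)))
      (χ α : (X → Bool) → Prop) (L : Clause X Y) (σ : Assn X Y)
      (hvars : ∀ l ∈ L, l.1 ∈ first D)
      (hfals : ∀ l ∈ L, ¬ satLit σ l) :
      Step ⟨Status.conflict L σ, C, D, χ, α⟩ ⟨Status.unsat, C, D, χ, α⟩
  | backtrack (S : Status X Y) (C : List (Set (Clause X Y))) (D : List (Set (X ⊕ Y)))
      (χ α : (X → Bool) → Prop) (k : ℕ) (h0 : 0 < k) (hk : k ≤ C.length) :
      Step ⟨S, C, D, χ, α⟩ ⟨S, C.take k, D.take k, χ, α⟩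

/-- Reachability from the initial state via the basic ID rules. -/
def Reachable {X Y : Type} [DecidableEq X] [DecidableEq Y] (φ : Set (Clause X Y))
    (s : IDState X Y) : Prop :=
  Relation.ReflTransGen Step (initState φ) s

/-! If Φ is false, some universal assignment `xa` leaves `φ` unsatisfiable, so resolution on
existential pivots derives a clause over `X` alone that `xa` falsifies. The solver replays any
such derivation while `D` stays `X`: once both unit clauses of every existential variable have
been decided, Conflict is available on every existential `y` under any assignment; Analyze with a
clause `c ∋ (y, b)` of `C(0)` turns the conflict clause `{y, ¬y}` into `c`, a second Analyze turns
it into a resolvent, and Learn stores that in `C(0)`. The final clause lies in `D(0) = X` and is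
falsified, so Unsat applies. -/

section Stack

variable {β : Type}

lemma stackUnion_cons (s : Set β) (S : List (Set β)) :
    stackUnion (s :: S) = s ∪ stackUnion S := by
  ext; simp [stackUnion]

lemma stackUnion_cons_map_empty {γ : Type} (s : Set β) (l : List γ) :
    stackUnion (s :: l.map fun _ => (∅ : Set β)) = s := by
  ext; simp [stackUnion]

lemma first_subset_stackUnion (S : List (Set β)) : first S ⊆ stackUnion S := by
  cases S with
  | nil => simp [first]
  | cons s S => simp [first, stackUnion_cons]

lemma first_addFirst (S : List (Set β)) (x : β) :
    first (addFirst S x) = insert x (first S) := by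
  cases S <;> simp [first, addFirst]

lemma stackUnion_addFirst (S : List (Set β)) (x : β) :
    stackUnion (addFirst S x) = insert x (stackUnion S) := by
  cases S <;> simp [addFirst, stackUnion_cons, Set.insert_union]

end Stack

section Resolution

variable {X Y : Type} [DecidableEq X] [DecidableEq Y]

inductive Derivable (φ : Set (Clause X Y)) : Clause X Y → Prop
  | base {c : Clause X Y} : c ∈ φ → Derivable φ c
  | resolve {c₁ c₂ : Clause X Y} {y : Y} {b : Bool} :
      Derivable φ c₁ → Derivable φ c₂ → (Sum.inr y, b) ∈ c₁ → (Sum.inr y, !b) ∈ c₂ →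
      Derivable φ (c₁.erase (Sum.inr y, b) ∪ c₂.erase (Sum.inr y, !b))

lemma ne_and_not_satLit_of_not_satLit_update {σ : Assn X Y} {w : X ⊕ Y} {b : Bool}
    {l : Lit X Y} (hl : ¬ satLit (Function.update σ w b) l) (hne : l ≠ (w, !b)) :
    l.1 ≠ w ∧ ¬ satLit σ l := by
  obtain ⟨v, p⟩ := l
  by_cases hv : v = w
  · subst hv
    cases b <;> cases p <;> simp_all [satLit]
  · simp_all [satLit]

/-- Split on the variables of `U` one at a time: the clauses obtained for `y := true` and
`y := false` either already avoid `y` or resolve on it. -/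
lemma exists_derivable_falsified_avoiding (φ : Set (Clause X Y)) (xa : X → Bool)
    (hxa : ∀ ya : Y → Bool, ¬ satCnf (combine xa ya) φ) (U : Finset Y) (ρ : Y → Bool) :
    ∃ L, Derivable φ L ∧
      ∀ l ∈ L, (∀ y ∈ U, l.1 ≠ Sum.inr y) ∧ ¬ satLit (combine xa ρ) l := by
  induction U using Finset.induction_on generalizing ρ with
  | empty =>
    obtain ⟨c, hc, hfals⟩ : ∃ c ∈ φ, ¬ satClause (combine xa ρ) c := by
      simpa [satCnf] using hxa ρ
    exact ⟨c, .base hc, fun l hl => ⟨by simp, fun h => hfals ⟨l, hl, h⟩⟩⟩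
  | insert y U _ ih =>
    have lift : ∀ {b : Bool} {L : Clause X Y} {l : Lit X Y},
        (∀ l ∈ L, (∀ y' ∈ U, l.1 ≠ Sum.inr y') ∧
          ¬ satLit (combine xa (Function.update ρ y b)) l) →
        l ∈ L → l ≠ (Sum.inr y, !b) →
        (∀ y' ∈ insert y U, l.1 ≠ Sum.inr y') ∧ ¬ satLit (combine xa ρ) l := by
      intro b L l hL hl hne
      obtain ⟨hU, hfals⟩ := hL l hl
      rw [combine, Sum.elim_update_right] at hfals
      obtain ⟨hy, hσ⟩ := ne_and_not_satLit_of_not_satLit_update hfals hne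
      exact ⟨Finset.forall_mem_insert _ _ _ |>.2 ⟨hy, hU⟩, hσ⟩
    obtain ⟨L₁, d₁, h₁⟩ := ih (Function.update ρ y true)
    obtain ⟨L₂, d₂, h₂⟩ := ih (Function.update ρ y false)
    by_cases m₁ : (Sum.inr y, false) ∈ L₁
    · by_cases m₂ : (Sum.inr y, true) ∈ L₂
      · refine ⟨_, .resolve (b := false) d₁ d₂ m₁ m₂, fun l hl => ?_⟩
        rcases Finset.mem_union.1 hl with hl | hl
        · exact lift h₁ (Finset.mem_of_mem_erase hl) (Finset.ne_of_mem_erase hl)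
        · exact lift h₂ (Finset.mem_of_mem_erase hl) (Finset.ne_of_mem_erase hl)
      · exact ⟨L₂, d₂, fun l hl => lift h₂ hl (ne_of_mem_of_not_mem hl m₂)⟩
    · exact ⟨L₁, d₁, fun l hl => lift h₁ hl (ne_of_mem_of_not_mem hl m₁)⟩

lemma exists_derivable_universal_falsified [Fintype Y] (φ : Set (Clause X Y))
    (xa : X → Bool) (hxa : ∀ ya : Y → Bool, ¬ satCnf (combine xa ya) φ) (ρ : Y → Bool) :
    ∃ L, Derivable φ L ∧
      ∀ l ∈ L, l.1 ∈ Set.range Sum.inl ∧ ¬ satLit (combine xa ρ) l := by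
  obtain ⟨L, hL, hfals⟩ := exists_derivable_falsified_avoiding φ xa hxa Finset.univ ρ
  refine ⟨L, hL, fun l hl => ⟨?_, (hfals l hl).2⟩⟩
  rcases h : l.1 with x | y
  · exact ⟨x, rfl⟩
  · exact absurd h ((hfals l hl).1 y (Finset.mem_univ y))

end Resolution

section Simulation

variable {X Y : Type}

local infix:50 " ⟶* " => Relation.ReflTransGen Step

abbrev readyState (C : List (Set (Clause X Y))) (D : List (Set (X ⊕ Y))) : IDState X Y :=
  ⟨Status.ready, C, D, fun _ => True, fun _ => True⟩

abbrev conflictState (L : Clause X Y) (σ : Assn X Y) (C : List (Set (Clause X Y)))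
    (D : List (Set (X ⊕ Y))) : IDState X Y :=
  ⟨Status.conflict L σ, C, D, fun _ => True, fun _ => True⟩

def HasExistLit (c : Clause X Y) : Prop := ∃ (y : Y) (b : Bool), (Sum.inr y, b) ∈ c

/-- The two unit clauses on `y`; deciding them makes `y` conflicted under every assignment. -/
def unitPair (y : Y) : Set (Clause X Y) := {{(Sum.inr y, true)}, {(Sum.inr y, false)}}

/-- Invariant of the clause stack while the solver, with `D` fixed to `X` after every
existential variable has been decided by `unitPair`, replays a resolution derivation. -/
structure ReplayInvariant (φ : Set (Clause X Y)) (C : List (Set (Clause X Y))) : Prop where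
  subset_first : φ ⊆ first C
  hasExistLit : ∀ c ∈ stackUnion C, HasExistLit c
  unit_mem : ∀ (y : Y) (b : Bool), ({(Sum.inr y, b)} : Clause X Y) ∈ stackUnion C

lemma ReplayInvariant.addFirst {φ : Set (Clause X Y)} {C : List (Set (Clause X Y))}
    (hC : ReplayInvariant φ C) {c : Clause X Y} (hc : HasExistLit c) :
    ReplayInvariant φ (addFirst C c) where
  subset_first := by
    rw [first_addFirst]; exact hC.subset_first.trans (Set.subset_insert _ _)
  hasExistLit := by
    rw [stackUnion_addFirst]; exact Set.forall_mem_insert.2 ⟨hc, hC.hasExistLit⟩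
  unit_mem y b := by
    rw [stackUnion_addFirst]; exact Set.mem_insert_of_mem _ (hC.unit_mem y b)

lemma replayInvariant_unitPairs {φ : Set (Clause X Y)} (hφ : ∀ c ∈ φ, HasExistLit c)
    {l : List Y} (hl : ∀ y, y ∈ l) :
    ReplayInvariant φ (φ :: l.map unitPair) where
  subset_first := subset_rfl
  hasExistLit := by
    rw [stackUnion_cons]
    rintro c (hc | ⟨_, hs, hc⟩)
    · exact hφ c hc
    obtain ⟨y, -, rfl⟩ := List.mem_map.1 hs
    rcases hc with rfl | rfl
    exacts [⟨y, true, Finset.mem_singleton_self _⟩, ⟨y, false, Finset.mem_singleton_self _⟩]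
  unit_mem y b := by
    rw [stackUnion_cons]
    refine Or.inr ⟨unitPair y, List.mem_map_of_mem (hl y), ?_⟩
    cases b
    exacts [Or.inr rfl, Or.inl rfl]

lemma satCnf_restrictC_range_inl {S : Set (Clause X Y)} (h : ∀ c ∈ S, HasExistLit c)
    (σ : Assn X Y) : satCnf σ (restrictC S (Set.range Sum.inl)) := by
  rintro c ⟨hcS, hX⟩
  obtain ⟨y, b, hyc⟩ := h c hcS
  obtain ⟨x, hx⟩ := hX _ hyc
  exact absurd hx Sum.inl_ne_inr

lemma hasUC_singleton (y : Y) (b : Bool) (D : Set (X ⊕ Y)) :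
    hasUC ({(Sum.inr y, b)} : Clause X Y) y D :=
  ⟨⟨b, Finset.mem_singleton_self _⟩, fun l hl hne => absurd (by simp_all) hne⟩

lemma ant_of_singleton_mem {S : Set (Clause X Y)} {y : Y} {b : Bool}
    (h : ({(Sum.inr y, b)} : Clause X Y) ∈ S) (D : Set (X ⊕ Y)) (σ : Assn X Y) :
    Ant S y D b σ :=
  ⟨_, ⟨h, hasUC_singleton y b D⟩, Finset.mem_singleton_self _,
    fun l hl hne => absurd (by simp_all) hne⟩

variable [DecidableEq X] [DecidableEq Y] {φ : Set (Clause X Y)} {D : List (Set (X ⊕ Y))}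

/-- A conflict on `y` followed by analysis with `c ∋ (y, b)` turns the conflict clause into `c`. -/
lemma reach_conflict_of_mem_first {C : List (Set (Clause X Y))} (hC : ReplayInvariant φ C)
    (hD : stackUnion D = Set.range Sum.inl) (σ : Assn X Y) {c : Clause X Y} {y : Y} {b : Bool}
    (hc : c ∈ first C) (hyc : (Sum.inr y, b) ∈ c) :
    readyState C D ⟶* conflictState c σ C D := by
  have hy : Sum.inr y ∉ stackUnion D := by simp [hD]
  have hres : ({(Sum.inr y, true), (Sum.inr y, false)} : Clause X Y).erase (Sum.inr y, !b) ∪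
      c.erase (Sum.inr y, b) = c := by
    have : ({(Sum.inr y, true), (Sum.inr y, false)} : Clause X Y).erase (Sum.inr y, !b) =
        {(Sum.inr y, b)} := by
      cases b <;> ext ⟨v, p⟩ <;> cases p <;> simp
    rw [this, ← Finset.insert_eq, Finset.insert_erase hyc]
  have hconflict := Step.conflict C D (fun _ => True) (fun _ => True) y σ hy
    (hD ▸ satCnf_restrictC_range_inl hC.hasExistLit σ) trivial trivial
    (ant_of_singleton_mem (hC.unit_mem y true) _ σ) (ant_of_singleton_mem (hC.unit_mem y false) _ σ)
  have hanalyze := Step.analyze C D (fun _ => True) (fun _ => True)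
    {(Sum.inr y, true), (Sum.inr y, false)} σ c (Sum.inr y, !b) hc (by cases b <;> simp)
    (by simpa using hyc)
  simp only [Bool.not_not, hres] at hanalyze
  exact .tail (.single hconflict) hanalyze

lemma step_resolve {C : List (Set (Clause X Y))} {c₁ c₂ : Clause X Y} {y : Y} {b : Bool}
    (σ : Assn X Y) (hc₂ : c₂ ∈ first C) (m₁ : (Sum.inr y, b) ∈ c₁)
    (m₂ : (Sum.inr y, !b) ∈ c₂) :
    Step (conflictState c₁ σ C D)
      (conflictState (c₁.erase (Sum.inr y, b) ∪ c₂.erase (Sum.inr y, !b)) σ C D) :=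
  Step.analyze C D _ _ c₁ σ c₂ (Sum.inr y, b) hc₂ m₁ m₂

lemma step_learn (hD : stackUnion D = Set.range Sum.inl) (C : List (Set (Clause X Y)))
    {L : Clause X Y} (hL : HasExistLit L) (σ : Assn X Y) :
    Step (conflictState L σ C D) (readyState (addFirst C L) D) := by
  obtain ⟨y, b, hyL⟩ := hL
  exact Step.learn C D _ _ L σ ⟨_, hyL, by simp [hD]⟩

lemma reach_conflict_of_derivable (hD : stackUnion D = Set.range Sum.inl) (σ : Assn X Y)
    {c : Clause X Y} (hc : Derivable φ c) (C : List (Set (Clause X Y)))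
    (hC : ReplayInvariant φ C) :
    ∃ C', readyState C D ⟶* conflictState c σ C' D ∧ ReplayInvariant φ C' ∧
      first C ⊆ first C' := by
  induction hc generalizing C with
  | base hcφ =>
    have hcC := hC.subset_first hcφ
    obtain ⟨y, b, hyc⟩ := hC.hasExistLit _ (first_subset_stackUnion C hcC)
    exact ⟨C, reach_conflict_of_mem_first hC hD σ hcC hyc, hC, subset_rfl⟩
  | @resolve c₁ c₂ y b _ _ m₁ m₂ ih₁ ih₂ =>
    obtain ⟨C₁, r₁, hC₁, s₁⟩ := ih₁ C hC
    obtain ⟨C₂, r₂, hC₂, s₂⟩ := ih₂ _ (hC₁.addFirst ⟨y, b, m₁⟩)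
    set C₃ := addFirst C₂ c₂
    have hC₃ : ReplayInvariant φ C₃ := hC₂.addFirst ⟨y, !b, m₂⟩
    have hfirst : first C₃ = insert c₂ (first C₂) := first_addFirst C₂ c₂
    rw [first_addFirst, Set.insert_subset_iff] at s₂
    refine ⟨C₃, ?_, hC₃, hfirst ▸ (s₁.trans s₂.2).trans (Set.subset_insert _ _)⟩
    calc readyState C D
        ⟶* conflictState c₁ σ C₁ D := r₁
      _ ⟶* readyState (addFirst C₁ c₁) D := .single (step_learn hD C₁ ⟨y, b, m₁⟩ σ)
      _ ⟶* conflictState c₂ σ C₂ D := r₂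
      _ ⟶* readyState C₃ D := .single (step_learn hD C₂ ⟨y, !b, m₂⟩ σ)
      _ ⟶* conflictState c₁ σ C₃ D :=
        reach_conflict_of_mem_first hC₃ hD σ (hfirst ▸ Set.mem_insert_of_mem _ s₂.1) m₁
      _ ⟶* _ := .single (step_resolve σ (hfirst ▸ Set.mem_insert _ _) m₁ m₂)

lemma reach_decide_unitPairs (φ : Set (Clause X Y)) (l : List Y) :
    initState φ ⟶*
      readyState (φ :: l.map unitPair) (Set.range Sum.inl :: l.map fun _ => ∅) := by
  induction l using List.reverseRecOn with
  | nil => exact .refl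
  | append_singleton l y ih =>
    have hdecide := Step.decide (φ :: l.map unitPair) (Set.range Sum.inl :: l.map fun _ => ∅)
      (fun _ => True) (fun _ => True) y (unitPair y) (by rw [stackUnion_cons_map_empty]; simp)
      ((Set.finite_singleton _).insert _)
      (by rintro c (rfl | rfl) <;> exact hasUC_singleton _ _ _)
    simpa using ih.tail hdecide

end Simulation

theorem stmt_7_general {X Y : Type} [Fintype Y] [DecidableEq X] [DecidableEq Y]
    (φ : Set (Clause X Y))
    (hφY : ∀ c ∈ φ, ∃ l ∈ c, ∃ y : Y, l.1 = Sum.inr y)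
    (hfalse : ¬ qbfTrue φ) :
    ∃ s : IDState X Y, Reachable φ s ∧ s.status = Status.unsat := by
  obtain ⟨xa, hxa⟩ : ∃ xa : X → Bool, ∀ ya : Y → Bool, ¬ satCnf (combine xa ya) φ := by
    by_contra! h
    exact hfalse ⟨fun xa => (h xa).choose, fun xa => (h xa).choose_spec⟩
  obtain ⟨L, hL, hLX⟩ := exists_derivable_universal_falsified φ xa hxa fun _ => true
  have hφ : ∀ c ∈ φ, HasExistLit c := fun c hc => by
    obtain ⟨⟨v, b⟩, hl, y, rfl⟩ := hφY c hc
    exact ⟨y, b, hl⟩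
  set ys := (Finset.univ : Finset Y).toList
  obtain ⟨C, hreach, -⟩ := reach_conflict_of_derivable (stackUnion_cons_map_empty _ ys)
    (combine xa fun _ => true) hL _
    (replayInvariant_unitPairs hφ fun y => Finset.mem_toList.2 (Finset.mem_univ y))
  exact ⟨_, ((reach_decide_unitPairs φ ys).trans hreach).tail
    (Step.unsat _ _ _ _ L _ (fun l hl => (hLX l hl).1) (fun l hl => (hLX l hl).2)), rfl⟩

/-- If Φ is false, some state with status UNSAT is reachable via basic ID. -/
theorem stmt_7 {X Y : Type} [Fintype X] [Fintype Y] [DecidableEq X] [DecidableEq Y]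
    (φ : Set (Clause X Y)) (hφfin : φ.Finite)
    (hφY : ∀ c ∈ φ, ∃ l ∈ c, ∃ y : Y, l.1 = Sum.inr y)
    (hfalse : ¬ qbfTrue φ) :
    ∃ s : IDState X Y, Reachable φ s ∧ s.status = Status.unsat :=
  stmt_7_general φ hφY hfalse
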